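/- arXiv:2011.13023 — 3 statements merged into one kernel-verified Lean document; each statement's English description precedes it below -/
import Mathlib

section
/- A point of model (1) is an equilibrium if and only if I_a = I_aQ = I_sQ = E = E_Q = 0 (assuming ω > 0, δ > 0, β > 0). Consequently the model exhibits a continuum of equilibrium states: any point with I_a = I_aQ = I_sQ = E = E_Q = 0 and S + S_Q + R + R_Q = 1 is an equilibrium. -/
/-- A nonnegative point of the simplex is an equilibrium of model (1)
(i.e. all nine right-hand sides vanish) if and only if
`Ia = IaQ = IsQ = E = EQ = 0` (for `β, ω, δ > 0`).  In particular, every point with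
these compartments zero and `S + SQ + R + RQ = 1` is an equilibrium, so the model
exhibits a continuum of equilibrium states. -/
theorem model1_equilibria_characterization
    (β ω δ ψ χ k ρ : ℝ) (hβ : 0 < β) (hω : 0 < ω) (hδ : 0 < δ) (hψ : 0 ≤ ψ) (hχ : 0 ≤ χ)
    (hk : k ∈ Set.Icc (0 : ℝ) 1) (hρ : ρ ∈ Set.Icc (0 : ℝ) 1) :
    ∀ S SQ E EQ Ia IaQ IsQ R RQ : ℝ,
      0 ≤ S → 0 ≤ SQ → 0 ≤ E → 0 ≤ EQ → 0 ≤ Ia → 0 ≤ IaQ → 0 ≤ IsQ → 0 ≤ R → 0 ≤ RQ →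
      S + SQ + E + EQ + Ia + IaQ + IsQ + R + RQ = 1 →
      ((-β * S * Ia - β * (1 - ρ) * S * (IaQ + IsQ) - χ * IsQ * S = 0 ∧
        -β * (1 - ρ) * SQ * Ia - β * (1 - ρ) ^ 2 * SQ * (IaQ + IsQ) + χ * IsQ * S = 0 ∧
        β * S * Ia + β * (1 - ρ) * S * (IaQ + IsQ) - ω * E - χ * IsQ * E = 0 ∧
        β * (1 - ρ) * SQ * Ia + β * (1 - ρ) ^ 2 * SQ * (IaQ + IsQ) - ω * EQ + χ * IsQ * E = 0 ∧
        k * ω * E - χ * IsQ * Ia - δ * Ia - ψ * Ia = 0 ∧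
        k * ω * EQ + χ * IsQ * Ia - δ * IaQ - ψ * IaQ = 0 ∧
        (1 - k) * ω * (E + EQ) + ψ * (Ia + IaQ) - δ * IsQ = 0 ∧
        δ * (Ia + IsQ) - χ * IsQ * R = 0 ∧
        δ * IaQ + χ * IsQ * R = 0) ↔
      (Ia = 0 ∧ IaQ = 0 ∧ IsQ = 0 ∧ E = 0 ∧ EQ = 0)) := by

  intro S SQ E EQ Ia IaQ IsQ R RQ hS hSQ hE hEQ hIa hIaQ hIsQ hR hRQ hsum
  constructor
  · rintro ⟨e1, e2, e3, e4, e5, e6, e7, e8, e9⟩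
    have hnn1 : 0 ≤ δ * IaQ := mul_nonneg hδ.le hIaQ
    have hnn2 : 0 ≤ χ * IsQ * R := mul_nonneg (mul_nonneg hχ hIsQ) hR
    have h1 : δ * IaQ = 0 := by linarith
    have h2 : χ * IsQ * R = 0 := by linarith
    have hIaQ0 : IaQ = 0 := by
      rcases mul_eq_zero.mp h1 with h | h
      · exact absurd h hδ.ne'
      · exact h
    have h8 : δ * (Ia + IsQ) = 0 := by linarith
    have hsum0 : Ia + IsQ = 0 := by
      rcases mul_eq_zero.mp h8 with h | h
      · exact absurd h hδ.ne'
      · exact h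
    have hIa0 : Ia = 0 := by linarith
    have hIsQ0 : IsQ = 0 := by linarith
    subst hIa0 hIaQ0 hIsQ0
    have hωE : ω * (E + EQ) = 0 := by nlinarith [e5, e6, e7]
    have hEEQ : E + EQ = 0 := by
      rcases mul_eq_zero.mp hωE with h | h
      · exact absurd h hω.ne'
      · exact h
    refine ⟨rfl, rfl, rfl, by linarith, by linarith⟩
  · rintro ⟨h1, h2, h3, h4, h5⟩
    subst h1 h2 h3 h4 h5
    refine ⟨by ring, by ring, by ring, by ring, by ring, by ring, by ring, by ring, by ring⟩
end

section
/- In model (1), if ω > 0 and δ > 0 and the solution is nonnegative and bounded, then E(t) + E_Q(t) → 0 and I_a(t) + I_aQ(t) + I_sQ(t) → 0 as t → ∞ (the epidemic dies out in every forward limit). -/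
/-!
Two conservation-type identities drive the argument: `(S + S_Q + E + E_Q)' = -ω (E + E_Q)` and
`(R + R_Q)' = δ (I_a + I_aQ + I_sQ)`. The left-hand sides are bounded, so the nonnegative
functions `E + E_Q` and `I_a + I_aQ + I_sQ` are derivatives of bounded monotone functions. Their own
derivatives are bounded on the simplex, so a Barbălat-type lemma forces both to tend to `0`.
-/

open MeasureTheory Filter

/-- A solution of the compartmental model (1) of the paper, with parameters
`β` (transmission rate), `ω` (rate of becoming infectious), `δ` (recovery rate),
`ψ` (testing rate), `χ` (indiscriminate quarantining rate), `k` (asymptomatic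
fraction), `ρ` (isolation effectiveness). -/
structure Model1Sol (β ω δ ψ χ k ρ : ℝ) where
  S : ℝ → ℝ
  SQ : ℝ → ℝ
  E : ℝ → ℝ
  EQ : ℝ → ℝ
  Ia : ℝ → ℝ
  IaQ : ℝ → ℝ
  IsQ : ℝ → ℝ
  R : ℝ → ℝ
  RQ : ℝ → ℝ
  hS : ∀ t : ℝ, HasDerivAt S
    (-β * S t * Ia t - β * (1 - ρ) * S t * (IaQ t + IsQ t) - χ * IsQ t * S t) t
  hSQ : ∀ t : ℝ, HasDerivAt SQ
    (-β * (1 - ρ) * SQ t * Ia t - β * (1 - ρ) ^ 2 * SQ t * (IaQ t + IsQ t)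
      + χ * IsQ t * S t) t
  hE : ∀ t : ℝ, HasDerivAt E
    (β * S t * Ia t + β * (1 - ρ) * S t * (IaQ t + IsQ t) - ω * E t - χ * IsQ t * E t) t
  hEQ : ∀ t : ℝ, HasDerivAt EQ
    (β * (1 - ρ) * SQ t * Ia t + β * (1 - ρ) ^ 2 * SQ t * (IaQ t + IsQ t)
      - ω * EQ t + χ * IsQ t * E t) t
  hIa : ∀ t : ℝ, HasDerivAt Ia
    (k * ω * E t - χ * IsQ t * Ia t - δ * Ia t - ψ * Ia t) t
  hIaQ : ∀ t : ℝ, HasDerivAt IaQ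
    (k * ω * EQ t + χ * IsQ t * Ia t - δ * IaQ t - ψ * IaQ t) t
  hIsQ : ∀ t : ℝ, HasDerivAt IsQ
    ((1 - k) * ω * (E t + EQ t) + ψ * (Ia t + IaQ t) - δ * IsQ t) t
  hR : ∀ t : ℝ, HasDerivAt R
    (δ * (Ia t + IsQ t) - χ * IsQ t * R t) t
  hRQ : ∀ t : ℝ, HasDerivAt RQ
    (δ * IaQ t + χ * IsQ t * R t) t

open Set Topology

section Barbalat

variable {F f f' : ℝ → ℝ}

lemma mul_sub_le_sub_of_hasDerivAt_of_le (hF : ∀ t, HasDerivAt F (f t) t) {a b c : ℝ}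
    (hab : a ≤ b) (hc : ∀ t ∈ Icc a b, c ≤ f t) : c * (b - a) ≤ F b - F a :=
  (convex_Icc a b).mul_sub_le_image_sub_of_le_deriv
    (fun t _ => (hF t).continuousAt.continuousWithinAt)
    (fun t _ => (hF t).differentiableAt.differentiableWithinAt)
    (fun t ht => (hF t).deriv ▸ hc t (interior_subset ht))
    a (left_mem_Icc.2 hab) b (right_mem_Icc.2 hab) hab

lemma exists_tendsto_of_hasDerivAt_of_nonneg_of_le {B : ℝ} (hF : ∀ t, HasDerivAt F (f t) t)
    (hf : ∀ t, 0 ≤ t → 0 ≤ f t) (hB : ∀ t, 0 ≤ t → F t ≤ B) :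
    ∃ L, Tendsto F atTop (𝓝 L) := by
  have hmono : Monotone fun t => F (max t 0) := fun a b hab => by
    have := mul_sub_le_sub_of_hasDerivAt_of_le hF (max_le_max_right 0 hab) (c := 0)
      fun t ht => hf t ((le_max_right a 0).trans ht.1)
    linarith
  have hbdd : BddAbove (range fun t => F (max t 0)) :=
    ⟨B, by rintro _ ⟨t, rfl⟩; exact hB _ (le_max_right t 0)⟩
  refine ⟨_, (tendsto_atTop_ciSup hmono hbdd).congr' ?_⟩
  filter_upwards [eventually_ge_atTop 0] with t ht
  rw [max_eq_left ht]

/-- A Barbălat-type lemma. The monotone bounded primitive `F` converges, so its increments over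
windows of a fixed length `d` vanish; but as `|f'| ≤ C`, wherever `f ≥ ε` it stays `≥ ε / 2` on a
window of length `d = ε / (2C)`, where `F` increases by at least `ε d / 2`. -/
theorem tendsto_zero_of_hasDerivAt_of_nonneg_of_le {B C : ℝ} (hC : 0 < C)
    (hF : ∀ t, HasDerivAt F (f t) t) (hf : ∀ t, HasDerivAt f (f' t) t)
    (hf' : ∀ t, 0 ≤ t → |f' t| ≤ C) (hnn : ∀ t, 0 ≤ t → 0 ≤ f t) (hB : ∀ t, 0 ≤ t → F t ≤ B) :
    Tendsto f atTop (𝓝 0) := by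
  obtain ⟨L, hL⟩ := exists_tendsto_of_hasDerivAt_of_nonneg_of_le hF hnn hB
  rw [Metric.tendsto_atTop]
  intro ε hε
  set d := ε / (2 * C) with hd
  have hd_pos : 0 < d := by positivity
  have hCd : C * d = ε / 2 := by rw [hd]; field_simp
  have hincr : Tendsto (fun t => F (t + d) - F t) atTop (𝓝 0) := by
    simpa using (hL.comp (tendsto_atTop_add_const_right _ d tendsto_id)).sub hL
  obtain ⟨N, hN⟩ := (Metric.tendsto_atTop.1 hincr) (ε / 2 * d) (by positivity)
  refine ⟨max N 0, fun t ht => ?_⟩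
  have ht0 : 0 ≤ t := (le_max_right N 0).trans ht
  rw [Real.dist_eq, sub_zero, abs_of_nonneg (hnn t ht0)]
  by_contra! hft
  have hwindow : ∀ s ∈ Icc t (t + d), ε / 2 ≤ f s := fun s hs => by
    have := mul_sub_le_sub_of_hasDerivAt_of_le hf hs.1 (c := -C)
      fun u hu => neg_le_of_abs_le (hf' u (ht0.trans hu.1))
    nlinarith [hs.2]
  have hgrowth := mul_sub_le_sub_of_hasDerivAt_of_le hF (by linarith) hwindow
  have hsmall := hN t ((le_max_left N 0).trans ht)
  rw [Real.dist_eq, sub_zero] at hsmall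
  linarith [le_abs_self (F (t + d) - F t), show t + d - t = d by ring]

end Barbalat

namespace Model1Sol

variable {β ω δ ψ χ k ρ : ℝ} (M : Model1Sol β ω δ ψ χ k ρ)

/-- The new-infection term of the equations for `E` and `E_Q`, in factored form. -/
def incidence (t : ℝ) : ℝ :=
  β * (M.S t + (1 - ρ) * M.SQ t) * (M.Ia t + (1 - ρ) * (M.IaQ t + M.IsQ t))

def InSimplex (t : ℝ) : Prop :=
  (0 ≤ M.S t ∧ 0 ≤ M.SQ t ∧ 0 ≤ M.E t ∧ 0 ≤ M.EQ t ∧ 0 ≤ M.Ia t ∧ 0 ≤ M.IaQ t ∧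
    0 ≤ M.IsQ t ∧ 0 ≤ M.R t ∧ 0 ≤ M.RQ t) ∧
  M.S t + M.SQ t + M.E t + M.EQ t + M.Ia t + M.IaQ t + M.IsQ t + M.R t + M.RQ t = 1

lemma hasDerivAt_E_add_EQ (t : ℝ) :
    HasDerivAt (fun t => M.E t + M.EQ t) (M.incidence t - ω * (M.E t + M.EQ t)) t :=
  ((M.hE t).add (M.hEQ t)).congr_deriv (by unfold incidence; ring)

lemma hasDerivAt_Ia_add_IaQ_add_IsQ (t : ℝ) :
    HasDerivAt (fun t => M.Ia t + M.IaQ t + M.IsQ t)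
      (ω * (M.E t + M.EQ t) - δ * (M.Ia t + M.IaQ t + M.IsQ t)) t :=
  (((M.hIa t).add (M.hIaQ t)).add (M.hIsQ t)).congr_deriv (by ring)

lemma hasDerivAt_S_add_SQ_add_E_add_EQ_div (hω : ω ≠ 0) (t : ℝ) :
    HasDerivAt (fun t => -(M.S t + M.SQ t + M.E t + M.EQ t) / ω) (M.E t + M.EQ t) t :=
  (((((M.hS t).add (M.hSQ t)).add (M.hE t)).add (M.hEQ t)).neg.div_const ω).congr_deriv
    (by field_simp; ring)

lemma hasDerivAt_R_add_RQ_div (hδ : δ ≠ 0) (t : ℝ) :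
    HasDerivAt (fun t => (M.R t + M.RQ t) / δ) (M.Ia t + M.IaQ t + M.IsQ t) t :=
  (((M.hR t).add (M.hRQ t)).div_const δ).congr_deriv (by field_simp; ring)

variable {M} {t : ℝ}

lemma InSimplex.incidence_nonneg (h : M.InSimplex t) (hβ : 0 ≤ β) (hρ : ρ ≤ 1) :
    0 ≤ M.incidence t := by
  obtain ⟨⟨hS, hSQ, -, -, hIa, hIaQ, hIsQ, -, -⟩, -⟩ := h
  have hρ' : 0 ≤ 1 - ρ := by linarith
  unfold incidence
  positivity

lemma InSimplex.incidence_le (h : M.InSimplex t) (hβ : 0 ≤ β) (hρ : ρ ∈ Icc (0 : ℝ) 1) :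
    M.incidence t ≤ β := by
  obtain ⟨⟨hS, hSQ, hE, hEQ, hIa, hIaQ, hIsQ, hR, hRQ⟩, hsum⟩ := h
  obtain ⟨hρ0, hρ1⟩ := hρ
  have hsusc : M.S t + (1 - ρ) * M.SQ t ≤ 1 := by nlinarith
  have hinf : M.Ia t + (1 - ρ) * (M.IaQ t + M.IsQ t) ≤ 1 := by nlinarith
  have hinf0 : 0 ≤ M.Ia t + (1 - ρ) * (M.IaQ t + M.IsQ t) := by
    have : 0 ≤ 1 - ρ := by linarith
    positivity
  calc M.incidence t
      = β * ((M.S t + (1 - ρ) * M.SQ t) * (M.Ia t + (1 - ρ) * (M.IaQ t + M.IsQ t))) := by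
        unfold incidence; ring
    _ ≤ β * (1 * 1) := by gcongr
    _ = β := by ring

lemma InSimplex.abs_incidence_sub_le (h : M.InSimplex t) (hβ : 0 ≤ β) (hω : 0 ≤ ω)
    (hρ : ρ ∈ Icc (0 : ℝ) 1) : |M.incidence t - ω * (M.E t + M.EQ t)| ≤ β + ω := by
  have hinc := h.incidence_le hβ hρ
  have hinc0 := h.incidence_nonneg hβ hρ.2
  obtain ⟨⟨hS, hSQ, hE, hEQ, hIa, hIaQ, hIsQ, hR, hRQ⟩, hsum⟩ := h
  have hexp : ω * (M.E t + M.EQ t) ≤ ω := by nlinarith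
  exact abs_sub_le_of_nonneg_of_le hinc0 (by linarith) (by positivity) (by linarith)

lemma InSimplex.abs_onset_sub_recovery_le (h : M.InSimplex t) (hω : 0 ≤ ω) (hδ : 0 ≤ δ) :
    |ω * (M.E t + M.EQ t) - δ * (M.Ia t + M.IaQ t + M.IsQ t)| ≤ ω + δ := by
  obtain ⟨⟨hS, hSQ, hE, hEQ, hIa, hIaQ, hIsQ, hR, hRQ⟩, hsum⟩ := h
  have hexp : ω * (M.E t + M.EQ t) ≤ ω := by nlinarith
  have hinf : δ * (M.Ia t + M.IaQ t + M.IsQ t) ≤ δ := by nlinarith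
  exact abs_sub_le_of_nonneg_of_le (by positivity) (by linarith) (by positivity) (by linarith)

end Model1Sol

theorem model1_epidemic_dies_out_general
    (β ω δ ψ χ k ρ : ℝ) (hβ : 0 < β) (hω : 0 < ω) (hδ : 0 < δ)
    (hρ : ρ ∈ Set.Icc (0 : ℝ) 1)
    (M : Model1Sol β ω δ ψ χ k ρ)
    (hnn : ∀ t : ℝ, 0 ≤ t →
      0 ≤ M.S t ∧ 0 ≤ M.SQ t ∧ 0 ≤ M.E t ∧ 0 ≤ M.EQ t ∧ 0 ≤ M.Ia t ∧ 0 ≤ M.IaQ t ∧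
        0 ≤ M.IsQ t ∧ 0 ≤ M.R t ∧ 0 ≤ M.RQ t)
    (hsum : ∀ t : ℝ, M.S t + M.SQ t + M.E t + M.EQ t + M.Ia t + M.IaQ t + M.IsQ t
      + M.R t + M.RQ t = 1) :
    Tendsto (fun t => M.E t + M.EQ t) atTop (nhds 0) ∧
    Tendsto (fun t => M.Ia t + M.IaQ t + M.IsQ t) atTop (nhds 0) := by
  have hM : ∀ t, 0 ≤ t → M.InSimplex t := fun t ht => ⟨hnn t ht, hsum t⟩
  constructor
  · refine tendsto_zero_of_hasDerivAt_of_nonneg_of_le (by positivity : 0 < β + ω) (B := 0)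
      (M.hasDerivAt_S_add_SQ_add_E_add_EQ_div hω.ne') M.hasDerivAt_E_add_EQ
      (fun t ht => (hM t ht).abs_incidence_sub_le hβ.le hω.le hρ)
      (fun t ht => ?_) (fun t ht => ?_)
    all_goals obtain ⟨⟨hS, hSQ, hE, hEQ, -⟩, -⟩ := hM t ht
    · positivity
    · exact div_nonpos_of_nonpos_of_nonneg (by linarith) hω.le
  · refine tendsto_zero_of_hasDerivAt_of_nonneg_of_le (by positivity : 0 < ω + δ) (B := 1 / δ)
      (M.hasDerivAt_R_add_RQ_div hδ.ne') M.hasDerivAt_Ia_add_IaQ_add_IsQ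
      (fun t ht => (hM t ht).abs_onset_sub_recovery_le hω.le hδ.le)
      (fun t ht => ?_) (fun t ht => ?_)
    all_goals obtain ⟨⟨hS, hSQ, hE, hEQ, hIa, hIaQ, hIsQ, hR, hRQ⟩, hsum⟩ := hM t ht
    · positivity
    · gcongr; linarith

/-- In model (1) with `ω, δ > 0`, along nonnegative bounded solutions
(total population 1), the epidemic dies out: `E + E_Q → 0` and
`I_a + I_aQ + I_sQ → 0` as `t → ∞`. -/
theorem model1_epidemic_dies_out
    (β ω δ ψ χ k ρ : ℝ) (hβ : 0 < β) (hω : 0 < ω) (hδ : 0 < δ) (hψ : 0 ≤ ψ) (hχ : 0 ≤ χ)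
    (hk : k ∈ Set.Icc (0 : ℝ) 1) (hρ : ρ ∈ Set.Icc (0 : ℝ) 1)
    (M : Model1Sol β ω δ ψ χ k ρ)
    (hnn : ∀ t : ℝ, 0 ≤ t →
      0 ≤ M.S t ∧ 0 ≤ M.SQ t ∧ 0 ≤ M.E t ∧ 0 ≤ M.EQ t ∧ 0 ≤ M.Ia t ∧ 0 ≤ M.IaQ t ∧
        0 ≤ M.IsQ t ∧ 0 ≤ M.R t ∧ 0 ≤ M.RQ t)
    (hsum : ∀ t : ℝ, M.S t + M.SQ t + M.E t + M.EQ t + M.Ia t + M.IaQ t + M.IsQ t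
      + M.R t + M.RQ t = 1) :
    Tendsto (fun t => M.E t + M.EQ t) atTop (nhds 0) ∧
    Tendsto (fun t => M.Ia t + M.IaQ t + M.IsQ t) atTop (nhds 0) :=
  model1_epidemic_dies_out_general β ω δ ψ χ k ρ hβ hω hδ hρ M hnn hsum
end

section
/- A point of model (3) with Σ > 0 is an equilibrium only if all infected compartments vanish: E_s = E_sQ = L_s = L_sQ = I_sQ = E_a = E_aQ = L_a = L_aQ = I_a = I_aQ = 0 (assuming ω_s, ω_a, λ_s, λ_a, γ_s, γ_a > 0 and ψ_s, ψ_a ≥ 0). -/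
/-- A nonnegative point of model (3) with `Σ > 0` is an equilibrium
(all 18 right-hand sides vanish) only if all the infected compartments vanish:
`E_s = E_sQ = L_s = L_sQ = I_sQ = E_a = E_aQ = L_a = L_aQ = I_a = I_aQ = 0`.
Here `os, oa` are the ω's, `lams, lama` the λ's, `gs, ga` the γ's, `ps, pa` the
ψ's, `FI, FQ` the forces of infection, `F` the recruitment rate and `Sig` the
non-quarantined population Σ. -/
theorem model3_equilibrium_infected_vanish
    (bs ba os oa lams lama gs ga ps pa ρ : ℝ)
    (hos : 0 < os) (hoa : 0 < oa) (hlams : 0 < lams) (hlama : 0 < lama)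
    (hgs : 0 < gs) (hga : 0 < ga) (hps : 0 ≤ ps) (hpa : 0 ≤ pa)
    (Ss SsQ Es EsQ Ls LsQ IsQ Rs Sa SaQ Ea EaQ La LaQ Ia IaQ Ra RaQ : ℝ)
    (hnn : 0 ≤ Ss ∧ 0 ≤ SsQ ∧ 0 ≤ Es ∧ 0 ≤ EsQ ∧ 0 ≤ Ls ∧ 0 ≤ LsQ ∧ 0 ≤ IsQ ∧ 0 ≤ Rs ∧
           0 ≤ Sa ∧ 0 ≤ SaQ ∧ 0 ≤ Ea ∧ 0 ≤ EaQ ∧ 0 ≤ La ∧ 0 ≤ LaQ ∧ 0 ≤ Ia ∧ 0 ≤ IaQ ∧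
           0 ≤ Ra ∧ 0 ≤ RaQ)
    (FI FQ F Sig : ℝ)
    (hFI : FI = bs * Ls + ba * (La + Ia))
    (hFQ : FQ = bs * (LsQ + IsQ) + ba * (LaQ + IaQ))
    (hF : F = lams * LsQ + ps * LsQ + pa * (LaQ + IaQ))
    (hSig : Sig = Ss + Sa + Es + Ea + Ls + La + Ia + Ra)
    (hSigpos : 0 < Sig)
    (heqSs : -Ss * FI - (1 - ρ) * Ss * FQ - Ss * F / Sig = 0)
    (heqSsQ : -(1 - ρ) * SsQ * FI + Ss * F / Sig = 0)
    (heqEs : Ss * FI + (1 - ρ) * Ss * FQ - os * Es - Es * F / Sig = 0)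
    (heqEsQ : (1 - ρ) * SsQ * FI - os * EsQ + Es * F / Sig = 0)
    (heqLs : os * Es - (lams + ps) * Ls - Ls * F / Sig = 0)
    (heqLsQ : os * EsQ - (lams + ps) * LsQ + Ls * F / Sig = 0)
    (heqIsQ : (lams + ps) * Ls + (lams + ps) * LsQ - gs * IsQ
      + pa * (La + LaQ) + pa * (Ia + IaQ) = 0)
    (heqRs : gs * IsQ = 0)
    (heqSa : -Sa * FI - (1 - ρ) * Sa * FQ - Sa * F / Sig = 0)
    (heqSaQ : -(1 - ρ) * SaQ * FI + Sa * F / Sig = 0)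
    (heqEa : Sa * FI + (1 - ρ) * Sa * FQ - oa * Ea - Ea * F / Sig = 0)
    (heqEaQ : (1 - ρ) * SaQ * FI - oa * EaQ + Ea * F / Sig = 0)
    (heqLa : oa * Ea - lama * La - pa * La - La * F / Sig = 0)
    (heqLaQ : oa * EaQ - lama * LaQ - pa * LaQ + La * F / Sig = 0)
    (heqIa : lama * La - pa * Ia - ga * Ia - Ia * F / Sig = 0)
    (heqIaQ : lama * LaQ - pa * IaQ - ga * IaQ + Ia * F / Sig = 0)
    (heqRa : ga * Ia - Ra * F / Sig = 0)
    (heqRaQ : ga * IaQ + Ra * F / Sig = 0) :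
    Es = 0 ∧ EsQ = 0 ∧ Ls = 0 ∧ LsQ = 0 ∧ IsQ = 0 ∧
      Ea = 0 ∧ EaQ = 0 ∧ La = 0 ∧ LaQ = 0 ∧ Ia = 0 ∧ IaQ = 0 := by
  obtain ⟨hSs, hSsQ, hEs, hEsQ, hLs, hLsQ, hIsQ, hRs, hSa, hSaQ, hEa, hEaQ, hLa, hLaQ,
    hIa, hIaQ, hRa, hRaQ⟩ := hnn
  have hlp : 0 < lams + ps := by linarith
  have hIsQ0 : IsQ = 0 := (mul_eq_zero.mp heqRs).resolve_left hgs.ne'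
  have t1 : 0 ≤ (lams + ps) * Ls := mul_nonneg hlp.le hLs
  have t2 : 0 ≤ (lams + ps) * LsQ := mul_nonneg hlp.le hLsQ
  have t3 : 0 ≤ pa * (La + LaQ) := mul_nonneg hpa (by linarith)
  have t4 : 0 ≤ pa * (Ia + IaQ) := mul_nonneg hpa (by linarith)
  have key : (lams + ps) * Ls + (lams + ps) * LsQ + pa * (La + LaQ) + pa * (Ia + IaQ) = 0 := by
    rw [hIsQ0] at heqIsQ; linear_combination heqIsQ
  have hLs0 : Ls = 0 :=
    (mul_eq_zero.mp (by linarith : (lams + ps) * Ls = 0)).resolve_left hlp.ne'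
  have hLsQ0 : LsQ = 0 :=
    (mul_eq_zero.mp (by linarith : (lams + ps) * LsQ = 0)).resolve_left hlp.ne'
  have hFnn : 0 ≤ F := by
    rw [hF, hLsQ0]
    have := mul_nonneg hpa (by linarith : (0:ℝ) ≤ LaQ + IaQ)
    linarith
  have hRaF : 0 ≤ Ra * F / Sig := div_nonneg (mul_nonneg hRa hFnn) hSigpos.le
  have t5 : 0 ≤ ga * IaQ := mul_nonneg hga.le hIaQ
  have hIaQ0 : IaQ = 0 :=
    (mul_eq_zero.mp (by linarith : ga * IaQ = 0)).resolve_left hga.ne'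
  have hRaF0 : Ra * F / Sig = 0 := by rw [hIaQ0] at heqRaQ; linear_combination heqRaQ
  have hIa0 : Ia = 0 :=
    (mul_eq_zero.mp (by linarith : ga * Ia = 0)).resolve_left hga.ne'
  have hIaF : Ia * F / Sig = 0 := by rw [hIa0]; ring
  have hLa0 : La = 0 := by
    have : lama * La = 0 := by rw [hIa0] at heqIa; linear_combination heqIa
    exact (mul_eq_zero.mp this).resolve_left hlama.ne'
  have hLaQ0 : LaQ = 0 := by
    have : lama * LaQ = 0 := by rw [hIaQ0] at heqIaQ; linear_combination heqIaQ - hIaF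
    exact (mul_eq_zero.mp this).resolve_left hlama.ne'
  have hLaF : La * F / Sig = 0 := by rw [hLa0]; ring
  have hEa0 : Ea = 0 := by
    have : oa * Ea = 0 := by rw [hLa0] at heqLa; linear_combination heqLa
    exact (mul_eq_zero.mp this).resolve_left hoa.ne'
  have hEaQ0 : EaQ = 0 := by
    have : oa * EaQ = 0 := by rw [hLaQ0] at heqLaQ; linear_combination heqLaQ - hLaF
    exact (mul_eq_zero.mp this).resolve_left hoa.ne'
  have hLsF : Ls * F / Sig = 0 := by rw [hLs0]; ring
  have hEs0 : Es = 0 := by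
    have : os * Es = 0 := by rw [hLs0] at heqLs; linear_combination heqLs
    exact (mul_eq_zero.mp this).resolve_left hos.ne'
  have hEsQ0 : EsQ = 0 := by
    have : os * EsQ = 0 := by rw [hLsQ0] at heqLsQ; linear_combination heqLsQ - hLsF
    exact (mul_eq_zero.mp this).resolve_left hos.ne'
  exact ⟨hEs0, hEsQ0, hLs0, hLsQ0, hIsQ0, hEa0, hEaQ0, hLa0, hLaQ0, hIa0, hIaQ0⟩
end
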